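/- arXiv:2603.16824 — 4 statements merged into one kernel-verified Lean document; each statement's English description precedes it below -/
import Mathlib

section
/- Let d ≥ 1 be an integer, δ > 1, β > 0, γ ∈ (0,1), and u ∈ (0,1). Then ∫_u^1 (u/s)^γ ( ∫_{ℝ^d} ρ_δ(β^{-1} u^γ s^{1−γ} |x|^d) dx ) ds = (β ω_d δ/(δ−1)) · log(1/u). -/
open MeasureTheory

/-- The long-range connection profile `ρ_δ(z) = min(1, z^{-δ})`. -/
noncomputable def rho (δ z : ℝ) : ℝ := min 1 (z ^ (-δ))

/-- The Lebesgue volume of the `d`-dimensional Euclidean unit ball. -/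
noncomputable def unitBallVol (d : ℕ) : ℝ :=
  (volume (Metric.ball (0 : EuclideanSpace ℝ (Fin d)) 1)).toReal

open Set

/-
For fixed `s`, the inner integral is radial: polar coordinates followed by the substitution
`t = c r^d` turn it into `ω_d c⁻¹ ∫₀^∞ ρ_δ`, and `∫₀^∞ ρ_δ = 1 + 1/(δ-1) = δ/(δ-1)`. With
`c = β⁻¹ u^γ s^{1-γ}` the prefactor `(u/s)^γ c⁻¹` is exactly `β/s`, so the outer integral is
`β ω_d δ/(δ-1) ∫_u^1 ds/s`.
-/

theorem rho_eq_one_of_le_one {δ z : ℝ} (hδ : 0 ≤ δ) (hz0 : 0 < z) (hz1 : z ≤ 1) :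
    rho δ z = 1 :=
  min_eq_left (Real.one_le_rpow_of_pos_of_le_one_of_nonpos hz0 hz1 (neg_nonpos.2 hδ))

theorem rho_eq_rpow_of_one_le {δ z : ℝ} (hδ : 0 ≤ δ) (hz : 1 ≤ z) : rho δ z = z ^ (-δ) :=
  min_eq_right (Real.rpow_le_one_of_one_le_of_nonpos hz (neg_nonpos.2 hδ))

theorem integral_rho_Ioi {δ : ℝ} (hδ : 1 < δ) : ∫ t in Ioi 0, rho δ t = δ / (δ - 1) := by
  have h_one : EqOn (rho δ) 1 (Ioc 0 1) := fun t ht ↦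
    rho_eq_one_of_le_one (by linarith) ht.1 ht.2
  have h_pow : EqOn (rho δ) (· ^ (-δ)) (Ioi 1) := fun t ht ↦
    rho_eq_rpow_of_one_le (by linarith) (le_of_lt ht)
  have h_exp : -δ < -1 := by linarith
  rw [← Ioc_union_Ioi_eq_Ioi zero_le_one,
    setIntegral_union Ioc_disjoint_Ioi_same measurableSet_Ioi
      ((integrableOn_const measure_Ioc_lt_top.ne).congr_fun h_one.symm measurableSet_Ioc)
      ((integrableOn_Ioi_rpow_of_lt h_exp one_pos).congr_fun h_pow.symm measurableSet_Ioi),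
    setIntegral_congr_fun measurableSet_Ioc h_one, setIntegral_congr_fun measurableSet_Ioi h_pow,
    integral_Ioi_rpow_of_lt h_exp one_pos]
  have : δ - 1 ≠ 0 := by linarith
  have : -δ + 1 ≠ 0 := by linarith
  simp only [Pi.one_apply, setIntegral_const, Real.volume_real_Ioc, sub_zero,
    max_eq_left zero_le_one, smul_eq_mul, mul_one, Real.one_rpow]
  field_simp
  ring

section Radial

variable {E F : Type*} [NormedAddCommGroup E] [NormedSpace ℝ E] [Nontrivial E]
  [FiniteDimensional ℝ E] [MeasurableSpace E] [BorelSpace E]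
  [NormedAddCommGroup F] [NormedSpace ℝ F]

theorem integral_comp_mul_norm_rpow_finrank (μ : Measure E) [μ.IsAddHaarMeasure] (f : ℝ → F)
    {c : ℝ} (hc : 0 < c) :
    ∫ x, f (c * ‖x‖ ^ (Module.finrank ℝ E : ℝ)) ∂μ
      = μ.real (Metric.ball 0 1) • c⁻¹ • ∫ t in Ioi 0, f t := by
  rw [integral_fun_norm_addHaar μ (fun r ↦ f (c * r ^ (Module.finrank ℝ E : ℝ)))]
  have hd := Module.finrank_pos (R := ℝ) (M := E)
  generalize Module.finrank ℝ E = d at hd ⊢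
  have h_jac (y : ℝ) : (d : ℝ) * y ^ (d - 1) = |(d : ℝ)| * y ^ ((d : ℝ) - 1) := by
    rw [abs_of_nonneg d.cast_nonneg, ← Nat.cast_pred hd, Real.rpow_natCast]
  have h_scale := integral_comp_mul_left_Ioi f 0 hc
  rw [mul_zero] at h_scale
  rw [smul_comm d, ← h_scale,
    ← integral_comp_rpow_Ioi (fun t ↦ f (c * t)) (Nat.cast_ne_zero.2 hd.ne'),
    ← Nat.cast_smul_eq_nsmul ℝ, ← integral_smul]
  simp_rw [smul_smul, h_jac]

end Radial

theorem integral_rho_mul_norm_rpow {d : ℕ} (hd : 1 ≤ d) {δ c : ℝ} (hδ : 1 < δ) (hc : 0 < c) :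
    ∫ x : EuclideanSpace ℝ (Fin d), rho δ (c * ‖x‖ ^ (d : ℝ))
      = unitBallVol d * c⁻¹ * (δ / (δ - 1)) := by
  have : Nonempty (Fin d) := Fin.pos_iff_nonempty.mp hd
  have h := integral_comp_mul_norm_rpow_finrank (volume : Measure (EuclideanSpace ℝ (Fin d)))
    (rho δ) hc
  rw [finrank_euclideanSpace_fin] at h
  rw [h, integral_rho_Ioi hδ, smul_eq_mul, smul_eq_mul, ← mul_assoc]
  rfl

theorem stmt3_general (d : ℕ) (hd : 1 ≤ d) (δ β γ u : ℝ) (hδ : 1 < δ) (hβ : 0 < β)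
    (hu0 : 0 < u) :
    ∫ s in u..1, (u / s) ^ γ *
        ∫ x : EuclideanSpace ℝ (Fin d),
          rho δ (β⁻¹ * u ^ γ * s ^ (1 - γ) * ‖x‖ ^ (d : ℝ))
      = (β * unitBallVol d * δ / (δ - 1)) * Real.log (1 / u) := by
  have h_integrand : ∀ s ∈ uIcc u 1, (u / s) ^ γ *
      ∫ x : EuclideanSpace ℝ (Fin d), rho δ (β⁻¹ * u ^ γ * s ^ (1 - γ) * ‖x‖ ^ (d : ℝ))
        = (β * unitBallVol d * δ / (δ - 1)) * s⁻¹ := by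
    intro s hs
    have hs0 : 0 < s := (lt_inf_iff.2 ⟨hu0, one_pos⟩).trans_le hs.1
    have hs_split : s ^ γ * s ^ (1 - γ) = s := by
      rw [← Real.rpow_add hs0, add_sub_cancel, Real.rpow_one]
    have : 0 < u ^ γ := Real.rpow_pos_of_pos hu0 γ
    have : δ - 1 ≠ 0 := by linarith
    rw [integral_rho_mul_norm_rpow hd hδ (by positivity), Real.div_rpow hu0.le hs0.le]
    conv_rhs => rw [← hs_split]
    field_simp
  rw [intervalIntegral.integral_congr h_integrand, intervalIntegral.integral_const_mul,
    integral_inv_of_pos hu0 one_pos]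

/-- Expected number of reciprocal out-neighbours of a vertex with birth time `u`
in the directed age-dependent random connection model, boundary case `Γ = γ`. -/
theorem stmt3 (d : ℕ) (hd : 1 ≤ d) (δ β γ u : ℝ) (hδ : 1 < δ) (hβ : 0 < β)
    (hγ0 : 0 < γ) (hγ1 : γ < 1) (hu0 : 0 < u) (hu1 : u < 1) :
    ∫ s in u..1, (u / s) ^ γ *
        ∫ x : EuclideanSpace ℝ (Fin d),
          rho δ (β⁻¹ * u ^ γ * s ^ (1 - γ) * ‖x‖ ^ (d : ℝ))
      = (β * unitBallVol d * δ / (δ - 1)) * Real.log (1 / u) :=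
  stmt3_general d hd δ β γ u hδ hβ hu0
end

section
/- Let c > 0 and a ∈ (0,1). Then there exist constants 0 < c₁ ≤ c₂ < ∞ and K ∈ ℕ such that for all natural numbers k ≥ K: c₁ · k^{−1−1/a} ≤ ∫_0^1 e^{−c u^{−a}} (c u^{−a})^k / k! du ≤ c₂ · k^{−1−1/a}. -/
/-!
The substitution `t = c u^{-a}` turns the integral into `(c^{1/a} / a) Γ(k - 1/a, c) / k!`,
where `Γ(s, c) = ∫_c^∞ e^{-t} t^{s-1} dt` is the upper incomplete Gamma function. It differs
from `Γ(s)` by at most `c^s`, which is negligible against `Γ(k - 1/a)`. Log-convexity of `Γ`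
gives Gautschi's inequality `Γ(x + s) ≤ Γ(x) x^s` for `s ∈ [0, 1]`; applied at `x` and at
`x + s` it gives `Γ(x + s) ≍ Γ(x) x^s`, which the recursion `Γ(x + 1) = x Γ(x)` extends to all
`s ≥ 0`. With `x = k - 1/a` and `s = 1 + 1/a` this reads `Γ(k - 1/a) ≍ k^{-1-1/a} k!`.
-/

open MeasureTheory Real Set Filter Topology Asymptotics
open scoped Nat

theorem Asymptotics.IsTheta.comp_tendsto {α β E F : Type*} [Norm E] [Norm F] {f : α → E}
    {g : α → F} {l : Filter α} {l' : Filter β} (h : f =Θ[l] g) {u : β → α}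
    (hu : Tendsto u l' l) : (f ∘ u) =Θ[l'] (g ∘ u) :=
  ⟨h.1.comp_tendsto hu, h.2.comp_tendsto hu⟩

theorem Asymptotics.isTheta_of_le_mul_of_le_mul {α : Type*} {l : Filter α} {f g : α → ℝ}
    {C₁ C₂ : ℝ} (hf : ∀ᶠ x in l, 0 ≤ f x) (hg : ∀ᶠ x in l, 0 ≤ g x)
    (hfg : ∀ᶠ x in l, f x ≤ C₁ * g x) (hgf : ∀ᶠ x in l, g x ≤ C₂ * f x) : f =Θ[l] g := by
  refine ⟨.of_bound C₁ ?_, .of_bound C₂ ?_⟩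
  · filter_upwards [hf, hg, hfg] with x hfx hgx h
    rwa [norm_of_nonneg hfx, norm_of_nonneg hgx]
  · filter_upwards [hf, hg, hgf] with x hfx hgx h
    rwa [norm_of_nonneg hfx, norm_of_nonneg hgx]

theorem Asymptotics.IsTheta.exists_pos_mul_le_and_le_mul {α : Type*} {l : Filter α}
    {f g : α → ℝ} (h : f =Θ[l] g) (hf : ∀ᶠ x in l, 0 ≤ f x) (hg : ∀ᶠ x in l, 0 ≤ g x) :
    ∃ c₁ c₂ : ℝ, 0 < c₁ ∧ c₁ ≤ c₂ ∧ ∀ᶠ x in l, c₁ * g x ≤ f x ∧ f x ≤ c₂ * g x := by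
  obtain ⟨C₂, hup⟩ := h.1.bound
  obtain ⟨C₁, hC₁, hlow⟩ := h.2.exists_pos
  refine ⟨C₁⁻¹, max C₂ C₁⁻¹, inv_pos.2 hC₁, le_max_right _ _, ?_⟩
  filter_upwards [hup, hlow.bound, hf, hg] with x hfg hgf hfx hgx
  rw [norm_of_nonneg hfx, norm_of_nonneg hgx] at hfg hgf
  constructor
  · rwa [inv_mul_le_iff₀ hC₁]
  · exact hfg.trans (by gcongr; exact le_max_left _ _)

theorem isEquivalent_add_const_atTop (s : ℝ) : (fun x : ℝ => x + s) ~[atTop] id := by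
  simpa [IsEquivalent, Pi.sub_def] using isLittleO_const_id_atTop s

namespace Real

theorem Gamma_add_le_mul_rpow {x s : ℝ} (hx : 0 < x) (hs₀ : 0 ≤ s) (hs₁ : s ≤ 1) :
    Gamma (x + s) ≤ Gamma x * x ^ s := by
  have hconv := convexOn_log_Gamma.2 (mem_Ioi.2 hx) (mem_Ioi.2 (by linarith : 0 < x + 1))
    (sub_nonneg.2 hs₁) hs₀ (sub_add_cancel 1 s)
  have hΓx := Gamma_pos_of_pos hx
  simp only [Function.comp_apply, smul_eq_mul, Gamma_add_one hx.ne', log_mul hx.ne' hΓx.ne',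
    show (1 - s) * x + s * (x + 1) = x + s by ring] at hconv
  rw [← log_le_log_iff (Gamma_pos_of_pos (by linarith)) (by positivity),
    log_mul hΓx.ne' (by positivity), log_rpow hx]
  linarith

theorem isTheta_Gamma_add_of_le_one {s : ℝ} (hs₀ : 0 ≤ s) (hs₁ : s ≤ 1) :
    (fun x => Gamma (x + s)) =Θ[atTop] fun x => Gamma x * x ^ s := by
  refine isTheta_of_le_mul_of_le_mul (C₁ := 1) (C₂ := 2) ?_ ?_ ?_ ?_ <;>
    filter_upwards [eventually_ge_atTop 1] with x hx
  · exact (Gamma_pos_of_pos (by linarith)).le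
  · exact (mul_pos (Gamma_pos_of_pos (by linarith)) (by positivity)).le
  · simpa using Gamma_add_le_mul_rpow (by linarith) hs₀ hs₁
  · have hx₀ : 0 < x := by linarith
    have hxs : 0 < x + s := by linarith
    have hup := Gamma_add_le_mul_rpow hxs (sub_nonneg.2 hs₁) (by linarith)
    rw [add_add_sub_cancel, Gamma_add_one hx₀.ne'] at hup
    calc Gamma x * x ^ s = x * Gamma x * x ^ (s - 1) := by
          rw [rpow_sub_one hx₀.ne']; field_simp
      _ ≤ Gamma (x + s) * (x + s) ^ (1 - s) * x ^ (s - 1) := by gcongr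
      _ ≤ Gamma (x + s) * (2 * x) ^ (1 - s) * x ^ (s - 1) := by
          gcongr
          linarith
      _ = 2 ^ (1 - s) * Gamma (x + s) := by
          rw [mul_rpow zero_le_two hx₀.le, mul_assoc, mul_assoc, ← rpow_add hx₀,
            show 1 - s + (s - 1) = 0 by ring, rpow_zero]
          ring
      _ ≤ 2 * Gamma (x + s) := by
          gcongr
          exact rpow_le_self_of_one_le one_le_two (by linarith)

theorem isTheta_Gamma_add_add_one {s : ℝ}
    (h : (fun x => Gamma (x + s)) =Θ[atTop] fun x => Gamma x * x ^ s) :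
    (fun x => Gamma (x + (s + 1))) =Θ[atTop] fun x => Gamma x * x ^ (s + 1) := by
  have hrec : (fun x => Gamma (x + (s + 1))) =ᶠ[atTop] fun x => (x + s) * Gamma (x + s) := by
    filter_upwards [eventually_gt_atTop (-s)] with x hx
    rw [← add_assoc, Gamma_add_one (by linarith)]
  have hpow : (fun x => x * (Gamma x * x ^ s)) =ᶠ[atTop] fun x => Gamma x * x ^ (s + 1) := by
    filter_upwards [eventually_gt_atTop 0] with x hx
    rw [rpow_add_one hx.ne']; ring
  exact hrec.trans_isTheta
    (((isEquivalent_add_const_atTop s).isTheta.mul h).trans_eventuallyEq hpow)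

theorem isTheta_Gamma_add {s : ℝ} (hs : 0 ≤ s) :
    (fun x => Gamma (x + s)) =Θ[atTop] fun x => Gamma x * x ^ s := by
  obtain ⟨n, t, ht₀, ht₁, rfl⟩ : ∃ n : ℕ, ∃ t, 0 ≤ t ∧ t ≤ 1 ∧ s = t + n :=
    ⟨⌊s⌋₊, s - ⌊s⌋₊, sub_nonneg.2 (Nat.floor_le hs), by linarith [Nat.lt_floor_add_one s],
      by ring⟩
  clear hs
  induction n with
  | zero => simpa using isTheta_Gamma_add_of_le_one ht₀ ht₁
  | succ n ih =>
    rw [Nat.cast_succ, ← add_assoc]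
    exact isTheta_Gamma_add_add_one ih

theorem isTheta_Gamma_natCast_sub {b : ℝ} (hb : -1 ≤ b) :
    (fun k : ℕ => Gamma (k - b)) =Θ[atTop] fun k => (k : ℝ) ^ (-1 - b) * k ! := by
  have hsub : Tendsto (fun k : ℕ => (k : ℝ) - b) atTop atTop :=
    tendsto_atTop_add_const_right _ _ tendsto_natCast_atTop_atTop
  have hfact : (fun k : ℕ => Gamma (k - b) * ((k : ℝ) - b) ^ (b + 1)) =Θ[atTop]
      fun k => (k ! : ℝ) := by
    refine ((isTheta_Gamma_add (s := b + 1) (by linarith)).comp_tendsto hsub).symm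
      |>.trans_eventuallyEq (Eventually.of_forall fun k => ?_)
    rw [Function.comp_apply, show (k : ℝ) - b + (b + 1) = k + 1 by ring, Gamma_nat_eq_factorial]
  have hpow : (fun k : ℕ => ((k : ℝ) - b) ^ (b + 1)) =Θ[atTop] fun k => (k : ℝ) ^ (b + 1) :=
    ((isEquivalent_add_const_atTop (-b)).comp_tendsto tendsto_natCast_atTop_atTop).isTheta.rpow
      (hsub.eventually_ge_atTop 0) (Eventually.of_forall fun k => Nat.cast_nonneg k)
  have hcancel : (fun k : ℕ => Gamma (k - b)) =ᶠ[atTop]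
      fun k => Gamma (k - b) * ((k : ℝ) - b) ^ (b + 1) * (((k : ℝ) - b) ^ (b + 1))⁻¹ := by
    filter_upwards [hsub.eventually_gt_atTop 0] with k hk
    rw [mul_inv_cancel_right₀ (rpow_pos_of_pos hk _).ne']
  refine hcancel.trans_isTheta ((hfact.mul hpow.inv).trans_eventuallyEq
    (Eventually.of_forall fun k => ?_))
  simp only [show -1 - b = -(b + 1) by ring, rpow_neg (Nat.cast_nonneg k), mul_comm]

noncomputable def upperIncompleteGamma (s c : ℝ) : ℝ := ∫ t in Ioi c, exp (-t) * t ^ (s - 1)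

theorem abs_Gamma_sub_upperIncompleteGamma_le {s c : ℝ} (hs : 1 ≤ s) (hc : 0 ≤ c) :
    |Gamma s - upperIncompleteGamma s c| ≤ c ^ s := by
  have hint := GammaIntegral_convergent (by linarith : 0 < s)
  have hsplit :
      Gamma s - upperIncompleteGamma s c = ∫ t in Ioc 0 c, exp (-t) * t ^ (s - 1) := by
    rw [Gamma_eq_integral (by linarith), upperIncompleteGamma, ← Ioc_union_Ioi_eq_Ioi hc,
      setIntegral_union (Ioc_disjoint_Ioi le_rfl) measurableSet_Ioi
        (hint.mono_set Ioc_subset_Ioi_self) (hint.mono_set (Ioi_subset_Ioi hc)),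
      add_sub_cancel_right]
  have hbound : ∀ t ∈ Ioc 0 c, ‖exp (-t) * t ^ (s - 1)‖ ≤ c ^ (s - 1) := by
    rintro t ⟨ht₀, htc⟩
    rw [norm_of_nonneg (by positivity)]
    calc exp (-t) * t ^ (s - 1) ≤ 1 * c ^ (s - 1) := by
          gcongr
          exact exp_le_one_iff.2 (by linarith)
      _ = c ^ (s - 1) := one_mul _
  rw [hsplit, ← norm_eq_abs]
  calc _ ≤ c ^ (s - 1) * volume.real (Ioc 0 c) :=
        norm_setIntegral_le_of_norm_le_const measure_Ioc_lt_top hbound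
    _ = c ^ s := by
        rw [volume_real_Ioc_of_le hc, sub_zero, ← rpow_add_one' hc (by linarith), sub_add_cancel]

theorem isLittleO_rpow_natCast_sub_rpow_mul_factorial {c : ℝ} (hc : 0 < c) (b : ℝ) :
    (fun k : ℕ => c ^ ((k : ℝ) - b)) =o[atTop] fun k => (k : ℝ) ^ (-1 - b) * k ! := by
  have hpoly : Tendsto (fun k : ℕ => (k : ℝ) ^ (1 + b) / exp k) atTop (𝓝 0) :=
    (isLittleO_rpow_exp_atTop (1 + b)).tendsto_div_nhds_zero.comp tendsto_natCast_atTop_atTop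
  have hlim := (hpoly.mul (FloorSemiring.tendsto_pow_div_factorial_atTop (exp 1 * c))).const_mul
    (c ^ (-b))
  rw [mul_zero, mul_zero] at hlim
  rw [isLittleO_iff_tendsto' ?_]
  · refine hlim.congr' ?_
    filter_upwards [eventually_gt_atTop 0] with k hk
    have hk' : (0 : ℝ) < k := Nat.cast_pos.2 hk
    rw [mul_pow, exp_one_pow, rpow_sub hc, rpow_natCast, show -1 - b = -(1 + b) by ring,
      rpow_neg hk'.le, rpow_neg hc.le]
    field_simp
  · filter_upwards [eventually_gt_atTop 0] with k hk h
    exact absurd h (mul_pos (rpow_pos_of_pos (Nat.cast_pos.2 hk) _) (by positivity)).ne'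

theorem isTheta_upperIncompleteGamma_natCast_sub {b c : ℝ} (hb : -1 ≤ b) (hc : 0 < c) :
    (fun k : ℕ => upperIncompleteGamma (k - b) c) =Θ[atTop]
      fun k => (k : ℝ) ^ (-1 - b) * k ! := by
  have herr : (fun k : ℕ => upperIncompleteGamma (k - b) c - Gamma (k - b)) =O[atTop]
      fun k : ℕ => c ^ ((k : ℝ) - b) := by
    refine .of_bound 1 ?_
    have hsub : Tendsto (fun k : ℕ => (k : ℝ) - b) atTop atTop :=
      tendsto_atTop_add_const_right _ _ tendsto_natCast_atTop_atTop
    filter_upwards [hsub.eventually_ge_atTop 1] with k hk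
    rw [one_mul, norm_eq_abs, abs_sub_comm, norm_of_nonneg (by positivity)]
    exact abs_Gamma_sub_upperIncompleteGamma_le hk hc.le
  simpa [Pi.add_def] using (isTheta_Gamma_natCast_sub hb).add_isLittleO
    (herr.trans_isLittleO (isLittleO_rpow_natCast_sub_rpow_mul_factorial hc b))

theorem setIntegral_Ioo_exp_neg_mul_rpow_neg_eq_upperIncompleteGamma {a c : ℝ} (ha : 0 < a)
    (hc : 0 < c) (p : ℝ) :
    ∫ u in Ioo 0 1, exp (-(c * u ^ (-a))) * (c * u ^ (-a)) ^ p
      = c ^ (1 / a) / a * upperIncompleteGamma (p - 1 / a) c := by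
  have himage : (fun u => c * u ^ (-a)) '' Ioo 0 1 = Ioi c := by
    ext t
    simp only [mem_image, mem_Ioo, mem_Ioi]
    constructor
    · rintro ⟨u, ⟨hu₀, hu₁⟩, rfl⟩
      exact lt_mul_of_one_lt_right hc
        (one_lt_rpow_of_pos_of_lt_one_of_neg hu₀ hu₁ (by linarith))
    · intro ht
      have htc : 1 < t / c := (one_lt_div hc).2 ht
      refine ⟨(t / c) ^ (-(1 / a)), ⟨by positivity,
        rpow_lt_one_of_one_lt_of_neg htc (by simpa using ha)⟩, ?_⟩
      rw [← rpow_mul (by positivity), show -(1 / a) * -a = 1 by field_simp, rpow_one,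
        mul_div_cancel₀ _ hc.ne']
  have hderiv : ∀ u ∈ Ioo (0 : ℝ) 1,
      HasDerivWithinAt (fun u => c * u ^ (-a)) (c * (-a * u ^ (-a - 1))) (Ioo 0 1) u :=
    fun u hu => ((hasDerivAt_rpow_const (Or.inl hu.1.ne')).const_mul c).hasDerivWithinAt
  have hinj : InjOn (fun u => c * u ^ (-a)) (Ioo 0 1) := fun u hu v hv h =>
    (strictAntiOn_rpow_Ioi_of_exponent_neg (neg_lt_zero.2 ha)).injOn hu.1 hv.1
      (mul_left_cancel₀ hc.ne' h)
  have hcov := integral_image_eq_integral_abs_deriv_smul measurableSet_Ioo hderiv hinj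
    fun t => exp (-t) * t ^ (p - 1 / a - 1)
  rw [himage] at hcov
  rw [upperIncompleteGamma, hcov, ← integral_const_mul]
  refine setIntegral_congr_fun measurableSet_Ioo fun u ⟨hu₀, hu₁⟩ => ?_
  have hv : 0 < c * u ^ (-a) := by positivity
  have hroot : (c * u ^ (-a)) ^ (1 / a) = c ^ (1 / a) * u⁻¹ := by
    rw [mul_rpow hc.le (by positivity), ← rpow_mul hu₀.le,
      show -a * (1 / a) = -1 by field_simp, rpow_neg_one]
  rw [smul_eq_mul, abs_mul, abs_mul, abs_neg, abs_of_pos hc, abs_of_pos ha,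
    abs_of_pos (by positivity), rpow_sub hv, rpow_sub hv, rpow_one, hroot,
    rpow_sub_one hu₀.ne']
  field_simp

end Real

theorem stmt7_general (c a : ℝ) (hc : 0 < c) (ha0 : 0 < a) :
    ∃ c₁ c₂ : ℝ, ∃ K : ℕ, 0 < c₁ ∧ c₁ ≤ c₂ ∧ ∀ k : ℕ, K ≤ k →
      c₁ * (k : ℝ) ^ (-1 - 1 / a)
          ≤ (∫ u in (0:ℝ)..1,
              Real.exp (-(c * u ^ (-a))) * (c * u ^ (-a)) ^ k / (Nat.factorial k : ℝ)) ∧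
      (∫ u in (0:ℝ)..1,
          Real.exp (-(c * u ^ (-a))) * (c * u ^ (-a)) ^ k / (Nat.factorial k : ℝ))
        ≤ c₂ * (k : ℝ) ^ (-1 - 1 / a) := by
  have hprob : ∀ k : ℕ, (∫ u in (0:ℝ)..1, exp (-(c * u ^ (-a))) * (c * u ^ (-a)) ^ k / k !) =
      c ^ (1 / a) / a * (upperIncompleteGamma (k - 1 / a) c / k !) := fun k => by
    simp_rw [intervalIntegral.integral_of_le zero_le_one, integral_Ioc_eq_integral_Ioo,
      integral_div, ← rpow_natCast,
      setIntegral_Ioo_exp_neg_mul_rpow_neg_eq_upperIncompleteGamma ha0 hc]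
    ring
  have hΘ : (fun k : ℕ => ∫ u in (0:ℝ)..1, exp (-(c * u ^ (-a))) * (c * u ^ (-a)) ^ k / k !)
      =Θ[atTop] fun k => (k : ℝ) ^ (-1 - 1 / a) := by
    simp_rw [hprob]
    have hb : -1 ≤ 1 / a := by linarith [one_div_pos.2 ha0]
    refine (isTheta_const_mul_left (by positivity)).2 <|
      ((isTheta_upperIncompleteGamma_natCast_sub hb hc).div isTheta_rfl).trans_eventuallyEq
        (Eventually.of_forall fun k => mul_div_cancel_right₀ _ (by positivity))
  obtain ⟨c₁, c₂, hc₁, hc₁₂, hbounds⟩ := hΘ.exists_pos_mul_le_and_le_mul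
    (Eventually.of_forall fun k => intervalIntegral.integral_nonneg zero_le_one fun u hu => by
      have := rpow_nonneg hu.1 (-a); positivity)
    (Eventually.of_forall fun k => by positivity)
  obtain ⟨K, hK⟩ := eventually_atTop.1 hbounds
  exact ⟨c₁, c₂, K, hc₁, hc₁₂, hK⟩

/-- Power-law tail of the mixed Poisson distribution with parameter `c·U^{-a}`,
`U` uniform on `(0,1)` and `a ∈ (0,1)`: for large `k` the probability of the
value `k` is of order `k^{-1-1/a}`. -/
theorem stmt7 (c a : ℝ) (hc : 0 < c) (ha0 : 0 < a) (ha1 : a < 1) :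
    ∃ c₁ c₂ : ℝ, ∃ K : ℕ, 0 < c₁ ∧ c₁ ≤ c₂ ∧ ∀ k : ℕ, K ≤ k →
      c₁ * (k : ℝ) ^ (-1 - 1 / a)
          ≤ (∫ u in (0:ℝ)..1,
              Real.exp (-(c * u ^ (-a))) * (c * u ^ (-a)) ^ k / (Nat.factorial k : ℝ)) ∧
      (∫ u in (0:ℝ)..1,
          Real.exp (-(c * u ^ (-a))) * (c * u ^ (-a)) ^ k / (Nat.factorial k : ℝ))
        ≤ c₂ * (k : ℝ) ^ (-1 - 1 / a) :=
  stmt7_general c a hc ha0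
end

section
/- Let d ≥ 1 be an integer, δ > 1, γ ∈ (0,1) and Γ ≥ 0 with γ(δ+1) > δ + Γ, and fix α₁ ∈ (1, (γ−Γ)/(δ(1−γ))) and α₂ ∈ (α₁, (α₁(γδ−1)+γ−Γ)/(δ−1)). Then for every β > 0 there exists c > 0 such that for all t ∈ (0, 1/2) and all x ∈ ℝ^d: ∫_{{y ∈ ℝ^d : |x−y|^d < t^{−α₂}}} ∫_0^{t^{α₁}} ∫_{ℝ^d} ∫_t^1 (t/u)^Γ · ρ_δ(β^{-1} t^γ u^{1−γ} |x−z|^d) · ρ_δ(β^{-1} s^γ u^{1−γ} |y−z|^d) du dz ds dy ≥ c · t^{Γ−γ+α₂(δ−1)−α₁(γδ−1)}, and the exponent Γ−γ+α₂(δ−1)−α₁(γδ−1) is strictly negative, so the left-hand side diverges as t ↓ 0. -/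
open MeasureTheory

/-!
Restrict the integral to the box where `|x - y|^d < t^{-α₂}`, `s ∈ (0, t^{α₁}]`,
`|x - z|^d < β t^{-γ}` and `u ∈ (1/2, 1]`. There `(t/u)^Γ ≥ t^Γ`, the first connection
probability equals `1`, and `|y - z|^d ≲ t^{-α₂}`, so the second one is `≳ t^{(α₂ - α₁γ)δ}`.
The box has volume `≍ t^{-γ} · t^{α₁} · t^{-α₂}`, which produces the exponent. Every level of
the iterated integral is integrable because the integrand is dominated by
`ρ_δ(β⁻¹ t |x - z|^d)`, integrable in `z` since `δ > 1`. The exponent is negative by the upper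
bound on `α₂`.
-/

open Real Metric Set Module Filter

lemma mul_measureReal_le_setIntegral {α : Type*} [MeasurableSpace α] {μ : Measure α}
    {f g : α → ℝ} {S T : Set α} {c : ℝ} (hT : MeasurableSet T) (hST : S ⊆ T) (hS : μ S ≠ ⊤)
    (hf : AEStronglyMeasurable f (μ.restrict T)) (hg : IntegrableOn g T μ)
    (hf0 : ∀ x ∈ T, 0 ≤ f x) (hfg : ∀ x ∈ T, f x ≤ g x) (hcf : ∀ᵐ x ∂μ.restrict S, c ≤ f x) :
    c * μ.real S ≤ ∫ x in T, f x ∂μ := by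
  have hfi : IntegrableOn f T μ := hg.mono' hf <| ae_restrict_of_forall_mem hT fun x hx => by
    rw [Real.norm_of_nonneg (hf0 x hx)]; exact hfg x hx
  calc c * μ.real S = ∫ _ in S, c ∂μ := by rw [setIntegral_const, smul_eq_mul, mul_comm]
    _ ≤ ∫ x in S, f x ∂μ := integral_mono_ae (integrableOn_const hS) (hfi.mono_set hST) hcf
    _ ≤ ∫ x in T, f x ∂μ :=
      setIntegral_mono_set hfi (ae_restrict_of_forall_mem hT hf0) (Eventually.of_forall hST)

lemma setIntegral_le_mul_measureReal_of_nonneg {α : Type*} [MeasurableSpace α] {μ : Measure α}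
    {f : α → ℝ} {T : Set α} {C : ℝ} (hT : μ T < ⊤) (hf0 : ∀ x ∈ T, 0 ≤ f x)
    (hfC : ∀ x ∈ T, f x ≤ C) : ∫ x in T, f x ∂μ ≤ C * μ.real T :=
  (le_abs_self _).trans <| norm_setIntegral_le_of_norm_le_const hT fun x hx => by
    rw [Real.norm_of_nonneg (hf0 x hx)]; exact hfC x hx

lemma setOf_norm_sub_rpow_lt_eq_ball {E : Type*} [SeminormedAddCommGroup E] {p a : ℝ}
    (hp : 0 < p) (ha : 0 ≤ a) (x : E) : {y | ‖x - y‖ ^ p < a} = ball x (a ^ p⁻¹) := by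
  ext y
  rw [mem_ofPred_eq, mem_ball, dist_comm, dist_eq_norm,
    lt_rpow_inv_iff_of_pos (norm_nonneg _) ha hp]

lemma norm_sub_rpow_le {E : Type*} [SeminormedAddCommGroup E] {p : ℝ} (hp : 0 ≤ p)
    (x y z : E) : ‖y - z‖ ^ p ≤ 2 ^ p * (‖x - y‖ ^ p + ‖x - z‖ ^ p) := by
  have hmax := le_max_left ‖x - y‖ ‖x - z‖
  have hmax' := le_max_right ‖x - y‖ ‖x - z‖
  calc ‖y - z‖ ^ p ≤ (2 * max ‖x - y‖ ‖x - z‖) ^ p := by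
        gcongr
        calc ‖y - z‖ ≤ ‖x - y‖ + ‖x - z‖ := by
              rw [norm_sub_rev x y]; exact norm_sub_le_norm_sub_add_norm_sub y x z
          _ ≤ 2 * max ‖x - y‖ ‖x - z‖ := by linarith
    _ = 2 ^ p * max (‖x - y‖ ^ p) (‖x - z‖ ^ p) := by
        rw [mul_rpow zero_le_two (by positivity), rpow_max (norm_nonneg _) (norm_nonneg _) hp]
    _ ≤ 2 ^ p * (‖x - y‖ ^ p + ‖x - z‖ ^ p) := by
        gcongr; exact max_le_add_of_nonneg (by positivity) (by positivity)

section Rho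

lemma rho_le_one (δ z : ℝ) : rho δ z ≤ 1 := min_le_left _ _

lemma rho_nonneg (δ : ℝ) {z : ℝ} (hz : 0 ≤ z) : 0 ≤ rho δ z :=
  le_min zero_le_one (rpow_nonneg hz _)

variable {δ : ℝ}

lemma rho_le_rho (hδ : 0 ≤ δ) {a b : ℝ} (ha : 0 < a) (hab : a ≤ b) : rho δ b ≤ rho δ a :=
  min_le_min le_rfl (rpow_le_rpow_of_nonpos ha hab (neg_nonpos.mpr hδ))

lemma rho_mul_le_rho_mul (hδ : 0 ≤ δ) {c c' w : ℝ} (hc' : 0 < c') (hc : c' ≤ c) (hw : 0 ≤ w) :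
    rho δ (c * w) ≤ rho δ (c' * w) := by
  rcases hw.eq_or_lt with rfl | hw
  · simp
  · exact rho_le_rho hδ (by positivity) (by gcongr)

lemma rho_eq_one (hδ : 0 ≤ δ) {a : ℝ} (ha : 0 < a) (ha1 : a ≤ 1) : rho δ a = 1 :=
  min_eq_left (one_le_rpow_of_pos_of_le_one_of_nonpos ha ha1 (neg_nonpos.mpr hδ))

lemma min_one_rpow_neg_mul_rpow_le_rho (hδ : 0 ≤ δ) {A a b : ℝ} (hA : 0 < A) (hb : 0 < b)
    (hb1 : b ≤ 1) (ha : 0 < a) (hab : a ≤ A / b) : min 1 (A ^ (-δ)) * b ^ δ ≤ rho δ a := by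
  refine le_trans ?_ (rho_le_rho hδ ha hab)
  have hbδ : b ^ δ ≤ 1 := rpow_le_one hb.le hb1 hδ
  rw [rho, div_rpow hA.le hb.le, rpow_neg hb.le, div_inv_eq_mul]
  exact le_min (mul_le_one₀ (min_le_left _ _) (by positivity) hbδ)
    (mul_le_mul_of_nonneg_right (min_le_right _ _) (by positivity))

lemma rho_mul_le {a v : ℝ} (ha : 0 < a) (hv : 0 ≤ v) :
    rho δ (a * v) ≤ max 1 (a ^ (-δ)) * rho δ v := by
  have hv' : 0 ≤ v ^ (-δ) := by positivity
  rw [rho, rho, mul_rpow ha.le hv]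
  rcases le_total (v ^ (-δ)) 1 with h | h
  · rw [min_eq_right h]
    exact (min_le_right _ _).trans (mul_le_mul_of_nonneg_right (le_max_right _ _) hv')
  · rw [min_eq_left h, mul_one]
    exact (min_le_left _ _).trans (le_max_left _ _)

lemma rho_rpow_le {p w : ℝ} (hpδ : 0 ≤ p * δ) (hw : 0 ≤ w) :
    rho δ (w ^ p) ≤ 2 ^ (p * δ) * (1 + w) ^ (-(p * δ)) := by
  set r := p * δ
  have hm : 0 < max 1 w := lt_max_of_lt_left one_pos
  calc rho δ (w ^ p) ≤ (max 1 w) ^ (-r) := by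
        rw [rho, ← rpow_mul hw, mul_neg]
        rcases le_total w 1 with h | h
        · rw [max_eq_left h, one_rpow]; exact min_le_left _ _
        · rw [max_eq_right h]; exact min_le_right _ _
    _ = 2 ^ r * (2 * max 1 w) ^ (-r) := by
        rw [mul_rpow zero_le_two hm.le, ← mul_assoc, ← rpow_add two_pos, add_neg_cancel,
          rpow_zero, one_mul]
    _ ≤ 2 ^ r * (1 + w) ^ (-r) := by
        gcongr 2 ^ r * ?_
        exact rpow_le_rpow_of_nonpos (by positivity)
          (by linarith [le_max_left 1 w, le_max_right 1 w]) (neg_nonpos.mpr hpδ)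

end Rho

section Haar

variable {E : Type*} [NormedAddCommGroup E] [NormedSpace ℝ E] [FiniteDimensional ℝ E]
  [MeasurableSpace E] [BorelSpace E] (μ : Measure E) [μ.IsAddHaarMeasure]

lemma measureReal_setOf_norm_sub_rpow_lt [Nontrivial E] {p a : ℝ}
    (hp : (finrank ℝ E : ℝ) = p) (ha : 0 ≤ a) (x : E) :
    μ.real {y | ‖x - y‖ ^ p < a} = a * μ.real (ball 0 1) := by
  subst hp
  have hn : (0 : ℝ) < finrank ℝ E := by exact_mod_cast finrank_pos
  rw [setOf_norm_sub_rpow_lt_eq_ball hn ha, measureReal_def,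
    Measure.addHaar_ball μ x (by positivity), ENNReal.toReal_mul,
    ENNReal.toReal_ofReal (by positivity), ← rpow_natCast, ← rpow_mul ha,
    inv_mul_cancel₀ hn.ne', rpow_one, measureReal_def]

lemma integrable_rho_mul_norm_sub_rpow {δ p a : ℝ} (hpδ : finrank ℝ E < p * δ) (ha : 0 < a)
    (x : E) : Integrable (fun z => rho δ (a * ‖x - z‖ ^ p)) μ := by
  have hpδ0 : 0 ≤ p * δ := (Nat.cast_nonneg _).trans hpδ.le
  have hmeas : Measurable fun z => rho δ (a * ‖x - z‖ ^ p) := by unfold rho; fun_prop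
  refine (((integrable_one_add_norm hpδ).comp_sub_left x).const_mul
    (max 1 (a ^ (-δ)) * 2 ^ (p * δ))).mono' hmeas.aestronglyMeasurable
    (Eventually.of_forall fun z => ?_)
  rw [Real.norm_of_nonneg (rho_nonneg δ (by positivity)), mul_assoc]
  exact (rho_mul_le ha (by positivity)).trans
    (mul_le_mul_of_nonneg_left (rho_rpow_le hpδ0 (norm_nonneg _)) (by positivity))

end Haar

section PathWeight

variable {E : Type*} [NormedAddCommGroup E]

noncomputable def pathWeight (δ γ Γ β t p : ℝ) (x y : E) (s : ℝ) (z : E) (u : ℝ) : ℝ :=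
  (t / u) ^ Γ * rho δ (β⁻¹ * t ^ γ * u ^ (1 - γ) * ‖x - z‖ ^ p) *
    rho δ (β⁻¹ * s ^ γ * u ^ (1 - γ) * ‖y - z‖ ^ p)

variable {δ γ Γ β t p α₁ α₂ : ℝ} {x y z : E} {s u : ℝ}

lemma pathWeight_nonneg (hβ : 0 ≤ β) (ht : 0 ≤ t) (hs : 0 ≤ s) (hu : 0 ≤ u) :
    0 ≤ pathWeight δ γ Γ β t p x y s z u :=
  mul_nonneg (mul_nonneg (rpow_nonneg (div_nonneg ht hu) _) (rho_nonneg δ (by positivity)))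
    (rho_nonneg δ (by positivity))

lemma pathWeight_le_rho (hδ : 0 ≤ δ) (hγ : γ ≤ 1) (hΓ : 0 ≤ Γ) (hβ : 0 < β) (ht : 0 < t)
    (hu : u ∈ Ioc t 1) : pathWeight δ γ Γ β t p x y s z u ≤ rho δ (β⁻¹ * t * ‖x - z‖ ^ p) := by
  have hu0 : 0 < u := ht.trans hu.1
  have hΓ1 : (t / u) ^ Γ ≤ 1 := rpow_le_one (by positivity) ((div_le_one hu0).mpr hu.1.le) hΓ
  have htu : β⁻¹ * t ≤ β⁻¹ * t ^ γ * u ^ (1 - γ) := by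
    rw [mul_assoc]
    gcongr
    calc t = t ^ γ * t ^ (1 - γ) := by rw [← rpow_add ht, add_sub_cancel, rpow_one]
      _ ≤ t ^ γ * u ^ (1 - γ) :=
        mul_le_mul_of_nonneg_left (rpow_le_rpow ht.le hu.1.le (by linarith)) (by positivity)
  have hfirst := rho_mul_le_rho_mul hδ (by positivity) htu (by positivity : 0 ≤ ‖x - z‖ ^ p)
  have hfirst0 := rho_nonneg δ (by positivity : 0 ≤ β⁻¹ * t ^ γ * u ^ (1 - γ) * ‖x - z‖ ^ p)
  calc pathWeight δ γ Γ β t p x y s z u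
      ≤ (t / u) ^ Γ * rho δ (β⁻¹ * t ^ γ * u ^ (1 - γ) * ‖x - z‖ ^ p) :=
        mul_le_of_le_one_right (by positivity) (rho_le_one _ _)
    _ ≤ rho δ (β⁻¹ * t * ‖x - z‖ ^ p) := (mul_le_of_le_one_left hfirst0 hΓ1).trans hfirst

/-- `rho δ 0 = 0` because `0 ^ (-δ) = 0`, so the bound fails at `z = x` and at `z = y`. -/
lemma le_pathWeight (hδ : 0 ≤ δ) (hγ0 : 0 ≤ γ) (hγ1 : γ ≤ 1) (hΓ : 0 ≤ Γ) (hβ : 0 < β)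
    (ht : 0 < t) (ht1 : t ≤ 1) (hp : 0 ≤ p) (hγα : γ ≤ α₂) (he : α₁ * γ ≤ α₂)
    (hy : ‖x - y‖ ^ p < t ^ (-α₂)) (hs : s ∈ Ioc 0 (t ^ α₁)) (hz : ‖x - z‖ ^ p < β * t ^ (-γ))
    (hzx : z ≠ x) (hzy : z ≠ y) (hu : u ∈ Ioc 0 1) :
    t ^ Γ * (min 1 ((2 ^ p * (1 + β) / β) ^ (-δ)) * t ^ ((α₂ - α₁ * γ) * δ)) ≤
      pathWeight δ γ Γ β t p x y s z u := by
  obtain ⟨hu0, hu1⟩ := hu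
  have hxz : 0 < ‖x - z‖ := norm_sub_pos_iff.mpr hzx.symm
  have hyz : 0 < ‖y - z‖ := norm_sub_pos_iff.mpr hzy.symm
  have huγ : u ^ (1 - γ) ≤ 1 := rpow_le_one hu0.le hu1 (by linarith)
  have hΓt : t ^ Γ ≤ (t / u) ^ Γ := rpow_le_rpow ht.le (le_div_self ht.le hu0 hu1) hΓ
  have hnear : rho δ (β⁻¹ * t ^ γ * u ^ (1 - γ) * ‖x - z‖ ^ p) = 1 := by
    refine rho_eq_one hδ (by positivity) ?_
    calc β⁻¹ * t ^ γ * u ^ (1 - γ) * ‖x - z‖ ^ p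
        ≤ β⁻¹ * t ^ γ * u ^ (1 - γ) * (β * t ^ (-γ)) := by gcongr
      _ = u ^ (1 - γ) := by rw [rpow_neg ht.le]; field_simp
      _ ≤ 1 := huγ
  have hfar : β⁻¹ * s ^ γ * u ^ (1 - γ) * ‖y - z‖ ^ p ≤
      2 ^ p * (1 + β) / β / t ^ (α₂ - α₁ * γ) := by
    have hyzp : ‖y - z‖ ^ p ≤ 2 ^ p * (1 + β) * t ^ (-α₂) := by
      have hγt : t ^ (-γ) ≤ t ^ (-α₂) := rpow_le_rpow_of_exponent_ge ht ht1 (by linarith)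
      calc ‖y - z‖ ^ p ≤ 2 ^ p * (‖x - y‖ ^ p + ‖x - z‖ ^ p) := norm_sub_rpow_le hp x y z
        _ ≤ 2 ^ p * (t ^ (-α₂) + β * t ^ (-α₂)) := by gcongr; nlinarith
        _ = 2 ^ p * (1 + β) * t ^ (-α₂) := by ring
    have hsγ : s ^ γ ≤ t ^ (α₁ * γ) := by
      rw [rpow_mul ht.le]; exact rpow_le_rpow hs.1.le hs.2 hγ0
    calc β⁻¹ * s ^ γ * u ^ (1 - γ) * ‖y - z‖ ^ p
        ≤ β⁻¹ * t ^ (α₁ * γ) * 1 * (2 ^ p * (1 + β) * t ^ (-α₂)) := by gcongr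
      _ = 2 ^ p * (1 + β) / β / t ^ (α₂ - α₁ * γ) := by
        rw [rpow_sub ht, rpow_neg ht.le]; field_simp
  have hsecond := min_one_rpow_neg_mul_rpow_le_rho hδ (by positivity) (rpow_pos_of_pos ht _)
    (rpow_le_one ht.le ht1 (by linarith)) (by have := hs.1; positivity) hfar
  rw [← rpow_mul ht.le] at hsecond
  calc t ^ Γ * (min 1 ((2 ^ p * (1 + β) / β) ^ (-δ)) * t ^ ((α₂ - α₁ * γ) * δ))
      ≤ (t / u) ^ Γ * rho δ (β⁻¹ * s ^ γ * u ^ (1 - γ) * ‖y - z‖ ^ p) := by gcongr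
    _ = pathWeight δ γ Γ β t p x y s z u := by rw [pathWeight, hnear, mul_one]

lemma integral_pathWeight_nonneg (hβ : 0 ≤ β) (ht : 0 ≤ t) (hs : 0 ≤ s) :
    0 ≤ ∫ u in Ioc t 1, pathWeight δ γ Γ β t p x y s z u :=
  setIntegral_nonneg measurableSet_Ioc fun _ hu =>
    pathWeight_nonneg hβ ht hs (ht.trans hu.1.le)

lemma integral_pathWeight_le_rho (hδ : 0 ≤ δ) (hγ : γ ≤ 1) (hΓ : 0 ≤ Γ) (hβ : 0 < β)
    (ht : 0 < t) (ht1 : t ≤ 1) (hs : 0 ≤ s) :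
    ∫ u in Ioc t 1, pathWeight δ γ Γ β t p x y s z u ≤ rho δ (β⁻¹ * t * ‖x - z‖ ^ p) := by
  refine (setIntegral_le_mul_measureReal_of_nonneg measure_Ioc_lt_top
    (fun u hu => pathWeight_nonneg hβ.le ht.le hs (ht.trans hu.1).le)
    (fun u hu => pathWeight_le_rho hδ hγ hΓ hβ ht hu)).trans ?_
  rw [Real.volume_real_Ioc_of_le ht1]
  exact mul_le_of_le_one_right (rho_nonneg δ (by positivity)) (by linarith)

lemma integral_integral_pathWeight_nonneg [MeasurableSpace E] {μ : Measure E} (hβ : 0 ≤ β)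
    (ht : 0 ≤ t) (hs : 0 ≤ s) :
    0 ≤ ∫ z, (∫ u in Ioc t 1, pathWeight δ γ Γ β t p x y s z u) ∂μ :=
  integral_nonneg fun _ => integral_pathWeight_nonneg hβ ht hs

variable [MeasurableSpace E] [BorelSpace E] [SecondCountableTopology E]

lemma measurable_pathWeight (δ γ Γ β t p : ℝ) (x : E) :
    Measurable fun q : ((E × ℝ) × E) × ℝ =>
      pathWeight δ γ Γ β t p x q.1.1.1 q.1.1.2 q.1.2 q.2 := by
  unfold pathWeight rho; fun_prop

lemma stronglyMeasurable_integral_pathWeight (δ γ Γ β t p : ℝ) (x : E) :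
    StronglyMeasurable fun q : (E × ℝ) × E =>
      ∫ u in Ioc t 1, pathWeight δ γ Γ β t p x q.1.1 q.1.2 q.2 u :=
  (measurable_pathWeight δ γ Γ β t p x).stronglyMeasurable.integral_prod_right'

lemma le_integral_pathWeight (hδ : 0 ≤ δ) (hγ0 : 0 ≤ γ) (hγ1 : γ ≤ 1) (hΓ : 0 ≤ Γ)
    (hβ : 0 < β) (ht : 0 < t) (ht2 : t ≤ 1 / 2) (hp : 0 ≤ p) (hγα : γ ≤ α₂)
    (he : α₁ * γ ≤ α₂) (hy : ‖x - y‖ ^ p < t ^ (-α₂)) (hs : s ∈ Ioc 0 (t ^ α₁))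
    (hz : ‖x - z‖ ^ p < β * t ^ (-γ)) (hzx : z ≠ x) (hzy : z ≠ y) :
    t ^ Γ * (min 1 ((2 ^ p * (1 + β) / β) ^ (-δ)) * t ^ ((α₂ - α₁ * γ) * δ)) *
        volume.real (Ioc (1 / 2 : ℝ) 1) ≤
      ∫ u in Ioc t 1, pathWeight δ γ Γ β t p x y s z u := by
  have hmeas : Measurable (pathWeight δ γ Γ β t p x y s z) :=
    (measurable_pathWeight δ γ Γ β t p x).comp (measurable_prodMk_left (x := ((y, s), z)))
  refine mul_measureReal_le_setIntegral (g := fun _ => 1) measurableSet_Ioc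
    (Ioc_subset_Ioc_left ht2) measure_Ioc_lt_top.ne hmeas.aestronglyMeasurable
    (integrableOn_const measure_Ioc_lt_top.ne)
    (fun u hu => pathWeight_nonneg hβ.le ht.le hs.1.le (ht.trans hu.1).le)
    (fun u hu => (pathWeight_le_rho (by linarith) hγ1 hΓ hβ ht hu).trans (rho_le_one _ _))
    (ae_restrict_of_forall_mem measurableSet_Ioc fun u hu => ?_)
  exact le_pathWeight hδ hγ0 hγ1 hΓ hβ ht (by linarith) hp hγα he hy hs hz hzx hzy
    ⟨by linarith [hu.1], hu.2⟩

end PathWeight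

section IteratedIntegral

variable {E : Type*} [NormedAddCommGroup E] [NormedSpace ℝ E] [FiniteDimensional ℝ E]
  [MeasurableSpace E] [BorelSpace E] {μ : Measure E} [μ.IsAddHaarMeasure]
variable {δ γ Γ β t p α₁ α₂ : ℝ} {x y : E} {s : ℝ}

lemma integral_integral_pathWeight_le (hδ : 0 ≤ δ) (hpδ : finrank ℝ E < p * δ) (hγ : γ ≤ 1)
    (hΓ : 0 ≤ Γ) (hβ : 0 < β) (ht : 0 < t) (ht1 : t ≤ 1) (hs : 0 ≤ s) :
    ∫ z, (∫ u in Ioc t 1, pathWeight δ γ Γ β t p x y s z u) ∂μ ≤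
      ∫ z, rho δ (β⁻¹ * t * ‖x - z‖ ^ p) ∂μ :=
  integral_mono_of_nonneg (ae_of_all _ fun _ => integral_pathWeight_nonneg hβ.le ht.le hs)
    (integrable_rho_mul_norm_sub_rpow μ hpδ (by positivity) x)
    (ae_of_all _ fun _ => integral_pathWeight_le_rho hδ hγ hΓ hβ ht ht1 hs)

lemma stronglyMeasurable_integral_integral_pathWeight (δ γ Γ β t p : ℝ) (x : E) :
    StronglyMeasurable fun q : E × ℝ =>
      ∫ z, (∫ u in Ioc t 1, pathWeight δ γ Γ β t p x q.1 q.2 z u) ∂μ :=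
  (stronglyMeasurable_integral_pathWeight δ γ Γ β t p x).integral_prod_right'

variable [Nontrivial E]

lemma le_integral_integral_pathWeight (hδ : 0 ≤ δ) (hpδ : finrank ℝ E < p * δ) (hγ0 : 0 ≤ γ)
    (hγ1 : γ ≤ 1) (hΓ : 0 ≤ Γ) (hβ : 0 < β) (ht : 0 < t) (ht2 : t ≤ 1 / 2) (hp : 0 < p)
    (hγα : γ ≤ α₂) (he : α₁ * γ ≤ α₂) (hy : ‖x - y‖ ^ p < t ^ (-α₂))
    (hs : s ∈ Ioc 0 (t ^ α₁)) :
    t ^ Γ * (min 1 ((2 ^ p * (1 + β) / β) ^ (-δ)) * t ^ ((α₂ - α₁ * γ) * δ)) *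
        volume.real (Ioc (1 / 2 : ℝ) 1) * μ.real {z | ‖x - z‖ ^ p < β * t ^ (-γ)} ≤
      ∫ z, (∫ u in Ioc t 1, pathWeight δ γ Γ β t p x y s z u) ∂μ := by
  have ht1 : t ≤ 1 := by linarith
  have hZ : {z | ‖x - z‖ ^ p < β * t ^ (-γ)} = ball x ((β * t ^ (-γ)) ^ p⁻¹) :=
    setOf_norm_sub_rpow_lt_eq_ball hp (by positivity) x
  have hmeas := (stronglyMeasurable_integral_pathWeight δ γ Γ β t p x).comp_measurable
    (measurable_prodMk_left (x := (y, s)))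
  rw [← setIntegral_univ]
  refine mul_measureReal_le_setIntegral MeasurableSet.univ (subset_univ _)
    (by rw [hZ]; exact measure_ball_lt_top.ne) hmeas.aestronglyMeasurable
    (integrable_rho_mul_norm_sub_rpow μ hpδ (by positivity) x).integrableOn
    (fun z _ => integral_pathWeight_nonneg hβ.le ht.le hs.1.le)
    (fun z _ => integral_pathWeight_le_rho hδ hγ1 hΓ hβ ht ht1 hs.1.le) ?_
  filter_upwards [ae_restrict_mem (by rw [hZ]; exact measurableSet_ball),
    ae_restrict_of_ae (μ.ae_ne x), ae_restrict_of_ae (μ.ae_ne y)] with z hz hzx hzy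
  exact le_integral_pathWeight hδ hγ0 hγ1 hΓ hβ ht ht2 hp.le hγα he hy hs hz hzx hzy

lemma le_integral_integral_integral_pathWeight (hδ : 0 ≤ δ) (hpδ : finrank ℝ E < p * δ)
    (hγ0 : 0 ≤ γ) (hγ1 : γ ≤ 1) (hΓ : 0 ≤ Γ) (hβ : 0 < β) (ht : 0 < t) (ht2 : t ≤ 1 / 2)
    (hp : 0 < p) (hγα : γ ≤ α₂) (he : α₁ * γ ≤ α₂) (hy : ‖x - y‖ ^ p < t ^ (-α₂)) :
    t ^ Γ * (min 1 ((2 ^ p * (1 + β) / β) ^ (-δ)) * t ^ ((α₂ - α₁ * γ) * δ)) *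
        volume.real (Ioc (1 / 2 : ℝ) 1) * μ.real {z | ‖x - z‖ ^ p < β * t ^ (-γ)} *
        volume.real (Ioc 0 (t ^ α₁)) ≤
      ∫ s in Ioc 0 (t ^ α₁), ∫ z, (∫ u in Ioc t 1, pathWeight δ γ Γ β t p x y s z u) ∂μ := by
  have hmeas := (stronglyMeasurable_integral_integral_pathWeight (μ := μ) δ γ Γ β t p x)
    |>.comp_measurable (measurable_prodMk_left (x := y))
  exact mul_measureReal_le_setIntegral measurableSet_Ioc subset_rfl measure_Ioc_lt_top.ne
    hmeas.aestronglyMeasurable (integrableOn_const measure_Ioc_lt_top.ne)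
    (fun s hs => integral_integral_pathWeight_nonneg hβ.le ht.le hs.1.le)
    (fun s hs => integral_integral_pathWeight_le hδ hpδ hγ1 hΓ hβ ht (by linarith) hs.1.le)
    (ae_restrict_of_forall_mem measurableSet_Ioc fun s hs =>
      le_integral_integral_pathWeight hδ hpδ hγ0 hγ1 hΓ hβ ht ht2 hp hγα he hy hs)

theorem le_iteratedIntegral_pathWeight (hp : (finrank ℝ E : ℝ) = p) (hδ : 1 < δ)
    (hγ0 : 0 ≤ γ) (hγ1 : γ ≤ 1) (hΓ : 0 ≤ Γ) (hβ : 0 < β) (ht : 0 < t) (ht2 : t ≤ 1 / 2)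
    (hγα : γ ≤ α₂) (he : α₁ * γ ≤ α₂) (x : E) :
    1 / 2 * min 1 ((2 ^ p * (1 + β) / β) ^ (-δ)) * β * μ.real (ball 0 1) ^ 2 *
        t ^ (Γ - γ + α₂ * (δ - 1) - α₁ * (γ * δ - 1)) ≤
      ∫ y in {y | ‖x - y‖ ^ p < t ^ (-α₂)}, (∫ s in (0 : ℝ)..t ^ α₁,
        ∫ z, (∫ u in t..1, pathWeight δ γ Γ β t p x y s z u) ∂μ) ∂μ := by
  have hp0 : 0 < p := hp ▸ Nat.cast_pos.mpr finrank_pos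
  have hpδ : (finrank ℝ E : ℝ) < p * δ := by rw [hp]; nlinarith
  have ht1 : t ≤ 1 := by linarith
  have hT : 0 < t ^ α₁ := rpow_pos_of_pos ht _
  have hY : {y | ‖x - y‖ ^ p < t ^ (-α₂)} = ball x ((t ^ (-α₂)) ^ p⁻¹) :=
    setOf_norm_sub_rpow_lt_eq_ball hp0 (by positivity) x
  have hmeas := (stronglyMeasurable_integral_integral_pathWeight (μ := μ) δ γ Γ β t p x)
    |>.integral_prod_right' (ν := volume.restrict (Ioc 0 (t ^ α₁)))
  simp only [intervalIntegral.integral_of_le hT.le, intervalIntegral.integral_of_le ht1]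
  refine le_trans (le_of_eq ?_) <| mul_measureReal_le_setIntegral
    (g := fun _ => (∫ z, rho δ (β⁻¹ * t * ‖x - z‖ ^ p) ∂μ) * volume.real (Ioc 0 (t ^ α₁)))
    (by rw [hY]; exact measurableSet_ball) subset_rfl (by rw [hY]; exact measure_ball_lt_top.ne)
    hmeas.aestronglyMeasurable
    (integrableOn_const (by rw [hY]; exact measure_ball_lt_top.ne))
    (fun y _ => setIntegral_nonneg measurableSet_Ioc fun s hs =>
      integral_integral_pathWeight_nonneg hβ.le ht.le hs.1.le)
    (fun y _ => setIntegral_le_mul_measureReal_of_nonneg measure_Ioc_lt_top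
      (fun s hs => integral_integral_pathWeight_nonneg hβ.le ht.le hs.1.le)
      (fun s hs => integral_integral_pathWeight_le (by linarith) hpδ hγ1 hΓ hβ ht ht1 hs.1.le))
    (ae_restrict_of_forall_mem (by rw [hY]; exact measurableSet_ball) fun y hy =>
      le_integral_integral_integral_pathWeight (by linarith) hpδ hγ0 hγ1 hΓ hβ ht ht2 hp0 hγα he
        hy)
  have hexp : t ^ (Γ - γ + α₂ * (δ - 1) - α₁ * (γ * δ - 1)) =
      t ^ Γ * t ^ ((α₂ - α₁ * γ) * δ) * t ^ (-γ) * t ^ α₁ * t ^ (-α₂) := by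
    simp only [← rpow_add ht]; ring_nf
  rw [volume_real_Ioc_of_le (by norm_num), volume_real_Ioc_of_le hT.le,
    measureReal_setOf_norm_sub_rpow_lt μ hp (by positivity),
    measureReal_setOf_norm_sub_rpow_lt μ hp (by positivity), hexp]
  ring

end IteratedIntegral

theorem stmt10_general (d : ℕ) (hd : 1 ≤ d) (δ γ Γ α₁ α₂ : ℝ) (hδ : 1 < δ) (hγ0 : 0 < γ)
    (hγ1 : γ < 1) (hΓ : 0 ≤ Γ) (hα₁l : 1 < α₁)
    (hα₂l : α₁ < α₂) (hα₂u : α₂ < (α₁ * (γ * δ - 1) + γ - Γ) / (δ - 1)) :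
    (Γ - γ + α₂ * (δ - 1) - α₁ * (γ * δ - 1) < 0) ∧
    ∀ β : ℝ, 0 < β → ∃ c : ℝ, 0 < c ∧ ∀ t : ℝ, 0 < t → t < 1 / 2 →
      ∀ x : EuclideanSpace ℝ (Fin d),
        c * t ^ (Γ - γ + α₂ * (δ - 1) - α₁ * (γ * δ - 1)) ≤
          ∫ y in {y : EuclideanSpace ℝ (Fin d) | ‖x - y‖ ^ (d : ℝ) < t ^ (-α₂)},
            ∫ s in (0:ℝ)..(t ^ α₁),
              ∫ z : EuclideanSpace ℝ (Fin d),
                ∫ u in t..1, (t / u) ^ Γ *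
                  rho δ (β⁻¹ * t ^ γ * u ^ (1 - γ) * ‖x - z‖ ^ (d : ℝ)) *
                  rho δ (β⁻¹ * s ^ γ * u ^ (1 - γ) * ‖y - z‖ ^ (d : ℝ)) := by
  refine ⟨by linarith [(lt_div_iff₀ (by linarith : 0 < δ - 1)).mp hα₂u], fun β hβ => ?_⟩
  have : Nonempty (Fin d) := ⟨⟨0, hd⟩⟩
  have hV : 0 < volume.real (ball (0 : EuclideanSpace ℝ (Fin d)) 1) :=
    ENNReal.toReal_pos (measure_ball_pos _ _ one_pos).ne' measure_ball_lt_top.ne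
  have hκ : 0 < min 1 ((2 ^ (d : ℝ) * (1 + β) / β) ^ (-δ)) :=
    lt_min one_pos (rpow_pos_of_pos (by positivity) _)
  refine ⟨_, by positivity, fun t ht ht2 x => le_iteratedIntegral_pathWeight (by simp) hδ hγ0.le
    hγ1.le hΓ hβ ht ht2.le (by linarith) (by nlinarith) x⟩

/-- Two-connection lemma (supercritical case `γ(δ+1) > δ + Γ`): the expected number
of pairs `(y,z)` with `y` old and close, `z` a young connector, realising the
directed two-step path `x → z → y`, is at least `c·t^{Γ-γ+α₂(δ-1)-α₁(γδ-1)}`,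
and this exponent is strictly negative, so the quantity diverges as `t ↓ 0`. -/
theorem stmt10 (d : ℕ) (hd : 1 ≤ d) (δ γ Γ α₁ α₂ : ℝ) (hδ : 1 < δ) (hγ0 : 0 < γ)
    (hγ1 : γ < 1) (hΓ : 0 ≤ Γ) (h : δ + Γ < γ * (δ + 1))
    (hα₁l : 1 < α₁) (hα₁u : α₁ < (γ - Γ) / (δ * (1 - γ)))
    (hα₂l : α₁ < α₂) (hα₂u : α₂ < (α₁ * (γ * δ - 1) + γ - Γ) / (δ - 1)) :
    (Γ - γ + α₂ * (δ - 1) - α₁ * (γ * δ - 1) < 0) ∧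
    ∀ β : ℝ, 0 < β → ∃ c : ℝ, 0 < c ∧ ∀ t : ℝ, 0 < t → t < 1 / 2 →
      ∀ x : EuclideanSpace ℝ (Fin d),
        c * t ^ (Γ - γ + α₂ * (δ - 1) - α₁ * (γ * δ - 1)) ≤
          ∫ y in {y : EuclideanSpace ℝ (Fin d) | ‖x - y‖ ^ (d : ℝ) < t ^ (-α₂)},
            ∫ s in (0:ℝ)..(t ^ α₁),
              ∫ z : EuclideanSpace ℝ (Fin d),
                ∫ u in t..1, (t / u) ^ Γ *
                  rho δ (β⁻¹ * t ^ γ * u ^ (1 - γ) * ‖x - z‖ ^ (d : ℝ)) *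
                  rho δ (β⁻¹ * s ^ γ * u ^ (1 - γ) * ‖y - z‖ ^ (d : ℝ)) :=
  stmt10_general d hd δ γ Γ α₁ α₂ hδ hγ0 hγ1 hΓ hα₁l hα₂l hα₂u
end

section
/- Fix γ ∈ (0, 1/2) and Γ ≥ 0, and define κ_{γ,Γ}(a,b) := b^{−γ} a^{γ−1} if b < a and κ_{γ,Γ}(a,b) := a^{Γ−γ} b^{−(1−γ+Γ)} if b ≥ a, for a, b ∈ (0,1). For ε ∈ (0,1) set A_ε(a) := ∫_ε^1 κ_{γ,Γ}(a,b) db and B_ε(a) := ∫_ε^1 κ_{γ,Γ}(a,b) · ( ∫_ε^1 κ_{γ,Γ}(w,b) dw ) db. Then sup_{ε ∈ (0,1)} ∫_ε^1 A_ε(a) · B_ε(a) da < ∞. -/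
/-!
On `(0,∞)²` the kernel is dominated by the separable kernels `a^{-x} b^{x-1}` for every
`x ∈ [γ, 1-γ]`: on `b < a` one trades a power of `a` for the same power of `b`, on `a ≤ b`
the reverse, and `Γ ≥ 0` only helps. Bounding the three occurrences of `κ` with `x = γ` (in
`A_ε`) and `x = q ∈ (1/2, 1-γ)` (both in `B_ε`), every integral becomes a power integral:
`A_ε(a) ≲ a^{-γ}`, `∫_ε^1 κ(w,b) dw ≲ b^{q-1}`, `B_ε(a) ≲ a^{-q} ∫ b^{2q-2} db ≲ a^{-q}`,
and `a^{-(γ+q)}` is integrable on `(0,1]` because `γ + q < 1`, which is possible only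
when `γ < 1/2`.
-/

open MeasureTheory Set

/-- The spatially integrated connection kernel `κ_{γ,Γ}(a,b)` of the directed
age-dependent random connection model: `b^{-γ} a^{γ-1}` if `b < a` (forward) and
`a^{Γ-γ} b^{-(1-γ+Γ)}` if `b ≥ a` (reciprocal). -/
noncomputable def kappa (γ Γ a b : ℝ) : ℝ :=
  if b < a then b ^ (-γ) * a ^ (γ - 1) else a ^ (Γ - γ) * b ^ (-(1 - γ + Γ))

lemma intervalIntegral_le_div_of_le_mul_rpow {f : ℝ → ℝ} {ε C s : ℝ} (hε0 : 0 ≤ ε)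
    (hε1 : ε ≤ 1) (hC : 0 ≤ C) (hs : 0 < s) (hf0 : ∀ x ∈ Ioc ε 1, 0 ≤ f x)
    (hf : ∀ x ∈ Ioc ε 1, f x ≤ C * x ^ (s - 1)) :
    ∫ x in ε..1, f x ≤ C / s := by
  have hint : IntervalIntegrable (fun x : ℝ => C * x ^ (s - 1)) volume ε 1 :=
    (intervalIntegral.intervalIntegrable_rpow' (by linarith)).const_mul C
  calc ∫ x in ε..1, f x ≤ ∫ x in ε..1, C * x ^ (s - 1) := by
        rw [intervalIntegral.integral_of_le hε1, intervalIntegral.integral_of_le hε1]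
        exact integral_mono_of_nonneg (ae_restrict_of_forall_mem measurableSet_Ioc hf0)
          (hint.1) (ae_restrict_of_forall_mem measurableSet_Ioc hf)
    _ = C * ((1 - ε ^ s) / s) := by
        rw [intervalIntegral.integral_const_mul, integral_rpow (Or.inl (by linarith))]
        simp
    _ ≤ C / s := by
        rw [← mul_div_assoc]
        gcongr
        exact mul_le_of_le_one_right hC (by linarith [Real.rpow_nonneg hε0 s])

theorem bowtie_integral_le_of_le_rpow {k : ℝ → ℝ → ℝ} {p q ε : ℝ} (hk0 : ∀ a b, 0 < a → 0 < b → 0 ≤ k a b)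
    (hkp : ∀ a b, 0 < a → 0 < b → k a b ≤ a ^ (-p) * b ^ (p - 1))
    (hkq : ∀ a b, 0 < a → 0 < b → k a b ≤ a ^ (-q) * b ^ (q - 1))
    (hp : 0 < p) (hq : 1 / 2 < q) (hpq : p + q < 1) (hε0 : 0 < ε) (hε1 : ε ≤ 1) :
    (∫ a in ε..1, (∫ b in ε..1, k a b) * (∫ b in ε..1, k a b * ∫ w in ε..1, k w b))
      ≤ 1 / p * (1 / (1 - q) / (2 * q - 1)) / (1 - (p + q)) := by
  have h1q : 0 < 1 - q := by linarith
  have h2q : 0 < 2 * q - 1 := by linarith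
  have hε : ∀ x ∈ Icc ε 1, 0 < x := fun x hx => hε0.trans_le hx.1
  set inner : ℝ → ℝ := fun b => ∫ w in ε..1, k w b
  have hinner0 : ∀ b, 0 < b → 0 ≤ inner b := fun b hb =>
    intervalIntegral.integral_nonneg hε1 fun w hw => hk0 w b (hε w hw) hb
  have hinner : ∀ b, 0 < b → inner b ≤ b ^ (q - 1) / (1 - q) := fun b hb =>
    intervalIntegral_le_div_of_le_mul_rpow hε0.le hε1 (Real.rpow_nonneg hb.le _) h1q
      (fun w hw => hk0 w b (hε0.trans hw.1) hb) fun w hw => by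
        rw [show 1 - q - 1 = -q by ring, mul_comm]
        exact hkq w b (hε0.trans hw.1) hb
  have hA0 : ∀ a, 0 < a → 0 ≤ ∫ b in ε..1, k a b := fun a ha =>
    intervalIntegral.integral_nonneg hε1 fun b hb => hk0 a b ha (hε b hb)
  have hA : ∀ a, 0 < a → ∫ b in ε..1, k a b ≤ a ^ (-p) / p := fun a ha =>
    intervalIntegral_le_div_of_le_mul_rpow hε0.le hε1 (Real.rpow_nonneg ha.le _) hp
      (fun b hb => hk0 a b ha (hε0.trans hb.1)) fun b hb => hkp a b ha (hε0.trans hb.1)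
  have hB0 : ∀ a, 0 < a → 0 ≤ ∫ b in ε..1, k a b * inner b := fun a ha =>
    intervalIntegral.integral_nonneg hε1 fun b hb =>
      mul_nonneg (hk0 a b ha (hε b hb)) (hinner0 b (hε b hb))
  have hB : ∀ a, 0 < a → ∫ b in ε..1, k a b * inner b ≤ a ^ (-q) / (1 - q) / (2 * q - 1) := by
    refine fun a ha => intervalIntegral_le_div_of_le_mul_rpow hε0.le hε1
      (div_nonneg (Real.rpow_nonneg ha.le _) h1q.le) h2q
      (fun b hb => mul_nonneg (hk0 a b ha (hε0.trans hb.1)) (hinner0 b (hε0.trans hb.1)))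
      fun b hb => ?_
    have hb0 : 0 < b := hε0.trans hb.1
    calc k a b * inner b ≤ a ^ (-q) * b ^ (q - 1) * (b ^ (q - 1) / (1 - q)) :=
          mul_le_mul (hkq a b ha hb0) (hinner b hb0) (hinner0 b hb0) (by positivity)
      _ = a ^ (-q) / (1 - q) * b ^ (2 * q - 1 - 1) := by
          rw [show 2 * q - 1 - 1 = (q - 1) + (q - 1) by ring, Real.rpow_add hb0]
          ring
  refine intervalIntegral_le_div_of_le_mul_rpow hε0.le hε1
    (mul_pos (one_div_pos.2 hp) (div_pos (one_div_pos.2 h1q) h2q)).le (by linarith)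
    (fun a ha => mul_nonneg (hA0 a (hε0.trans ha.1)) (hB0 a (hε0.trans ha.1))) fun a ha => ?_
  have ha0 : 0 < a := hε0.trans ha.1
  calc (∫ b in ε..1, k a b) * (∫ b in ε..1, k a b * inner b)
      ≤ a ^ (-p) / p * (a ^ (-q) / (1 - q) / (2 * q - 1)) :=
        mul_le_mul (hA a ha0) (hB a ha0) (hB0 a ha0) (by positivity)
    _ = 1 / p * (1 / (1 - q) / (2 * q - 1)) * a ^ (1 - (p + q) - 1) := by
        rw [show 1 - (p + q) - 1 = -p + -q by ring, Real.rpow_add ha0]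
        ring

lemma kappa_nonneg {γ Γ a b : ℝ} (ha : 0 ≤ a) (hb : 0 ≤ b) : 0 ≤ kappa γ Γ a b := by
  unfold kappa
  split <;> positivity

lemma kappa_le_rpow_mul_rpow {γ Γ a b x : ℝ} (hΓ : 0 ≤ Γ) (hγx : γ ≤ x) (hxγ : x ≤ 1 - γ)
    (ha : 0 < a) (hb : 0 < b) : kappa γ Γ a b ≤ a ^ (-x) * b ^ (x - 1) := by
  unfold kappa
  split
  case isTrue hba =>
    calc b ^ (-γ) * a ^ (γ - 1) = b ^ (-γ) * a ^ (γ - 1 + x) * a ^ (-x) := by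
          rw [mul_assoc, ← Real.rpow_add ha]; ring_nf
      _ ≤ b ^ (-γ) * b ^ (γ - 1 + x) * a ^ (-x) := by
          have := Real.rpow_le_rpow_of_nonpos hb hba.le (show γ - 1 + x ≤ 0 by linarith)
          gcongr
      _ = a ^ (-x) * b ^ (x - 1) := by
          rw [← Real.rpow_add hb]; ring_nf
  case isFalse hab =>
    calc a ^ (Γ - γ) * b ^ (-(1 - γ + Γ)) = a ^ (Γ - γ + x) * a ^ (-x) * b ^ (-(1 - γ + Γ)) := by
          rw [← Real.rpow_add ha]; ring_nf
      _ ≤ b ^ (Γ - γ + x) * a ^ (-x) * b ^ (-(1 - γ + Γ)) := by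
          have := Real.rpow_le_rpow ha.le (not_lt.mp hab) (show 0 ≤ Γ - γ + x by linarith)
          gcongr
      _ = a ^ (-x) * b ^ (x - 1) := by
          rw [mul_right_comm, ← Real.rpow_add hb]; ring_nf

/-- Uniform boundedness of the truncated expected open-bow-tie count for `γ < 1/2`:
with `A_ε(a) = ∫_ε^1 κ(a,b) db` and
`B_ε(a) = ∫_ε^1 κ(a,b) (∫_ε^1 κ(w,b) dw) db`, the quantity
`∫_ε^1 A_ε(a) B_ε(a) da` is bounded uniformly in `ε ∈ (0,1)`. -/
theorem stmt16 (γ Γ : ℝ) (hγ0 : 0 < γ) (hγ1 : γ < 1 / 2) (hΓ : 0 ≤ Γ) :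
    ∃ M : ℝ, ∀ ε : ℝ, 0 < ε → ε < 1 →
      (∫ a in ε..1,
          (∫ b in ε..1, kappa γ Γ a b) *
          (∫ b in ε..1, kappa γ Γ a b * ∫ w in ε..1, kappa γ Γ w b))
        ≤ M := by
  refine ⟨_, fun ε hε0 hε1 => bowtie_integral_le_of_le_rpow (q := 3 / 4 - γ / 2)
    (fun a b ha hb => kappa_nonneg ha.le hb.le) ?_ ?_ hγ0 (by linarith) (by linarith) hε0 hε1.le⟩
  · exact fun a b ha hb => kappa_le_rpow_mul_rpow hΓ le_rfl (by linarith) ha hb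
  · exact fun a b ha hb => kappa_le_rpow_mul_rpow hΓ (by linarith) (by linarith) ha hb
end
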